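/- Let G be a parity game, and suppose a lifting sequence is applied in which a vertex v is the first vertex whose measure value becomes ⊤. Then the priority P(v) of v is odd. -/

import Mathlib

open Classical

noncomputable section

instance (priority := 5000) (n : ℕ) : WellFoundedLT (Fin n) :=
  Finite.to_wellFoundedLT

noncomputable instance (priority := 5000) (n : ℕ) : LinearOrder (Lex (Fin n → ℕ)) :=
  inferInstance

/-- Least element of a set, if it exists; otherwise a default value. -/
def sLeast {α : Type*} [Preorder α] (s : Set α) (dflt : α) : α :=
  if h : ∃ a, IsLeast s a then h.choose else dflt

/-- Greatest element of a set, if it exists; otherwise a default value. -/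
def sGreatest {α : Type*} [Preorder α] (s : Set α) (dflt : α) : α :=
  if h : ∃ a, IsGreatest s a then h.choose else dflt

/-- A parity game: a finite set of vertices with a total edge relation, a priority
function and an ownership function (`ownerEven v = true` iff `v ∈ V_Even`). -/
structure ParityGame (V : Type*) [Fintype V] where
  E : V → V → Prop
  total : ∀ v, ∃ w, E v w
  prio : V → ℕ
  ownerEven : V → Bool

namespace ParityGame

variable {V : Type*} [Fintype V] [DecidableEq V] (G : ParityGame V)

/-- `d` is one plus the maximal priority occurring in the game. -/
def d : ℕ := (Finset.univ.sup G.prio) + 1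

/-- The domain of (extended) measures: `⊤` together with `d`-tuples of naturals,
ordered lexicographically with `⊤` maximal.  This is `M_Even_ext` (together with
tuples that are nonzero at even positions, which are never used). -/
abbrev Meas : Type _ := WithTop (Lex (Fin G.d → ℕ))

/-- `nP i` is the number of vertices of priority `i`. -/
def nP (i : ℕ) : ℕ := (Finset.univ.filter (fun v => G.prio v = i)).card

/-- Membership in `M_Even`: `⊤`, or a `d`-tuple which is `0` at even positions and
bounded by `nP i` at odd positions `i`. -/
def inMEven (m : G.Meas) : Prop :=
  m = ⊤ ∨ ∃ f : Fin G.d → ℕ, m = ((toLex f : Lex (Fin G.d → ℕ)) : G.Meas) ∧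
    ∀ i : Fin G.d, (Even (i : ℕ) → f i = 0) ∧ (¬ Even (i : ℕ) → f i ≤ G.nP (i : ℕ))

/-- Membership in `M_Even_ext`: `⊤`, or a `d`-tuple which is `0` at even positions. -/
def inMEvenExt (m : G.Meas) : Prop :=
  m = ⊤ ∨ ∃ f : Fin G.d → ℕ, m = ((toLex f : Lex (Fin G.d → ℕ)) : G.Meas) ∧
    ∀ i : Fin G.d, Even (i : ℕ) → f i = 0

/-- Truncation of a measure to components `0, …, k` (other components set to `0`);
`⊤` is mapped to `⊤`. -/
def trunc (k : ℕ) (m : G.Meas) : G.Meas :=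
  WithTop.map (fun f : Lex (Fin G.d → ℕ) => toLex (fun j : Fin G.d => if (j : ℕ) ≤ k then ofLex f j else 0)) m

/-- `a ≥_k b` : comparison of measures on components `0, …, k` only. -/
def geAt (k : ℕ) (a b : G.Meas) : Prop := G.trunc k b ≤ G.trunc k a

/-- `a >_k b` : strict comparison of measures on components `0, …, k` only. -/
def gtAt (k : ℕ) (a b : G.Meas) : Prop := G.trunc k b < G.trunc k a

/-- The defining condition of `Prog(ρ,v,w)`. -/
def progCond (ρ : V → G.Meas) (v w : V) (m : G.Meas) : Prop :=
  if Even (G.prio v) then G.geAt (G.prio v) m (ρ w)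
  else (G.gtAt (G.prio v) m (ρ w) ∨ (m = ⊤ ∧ ρ w = ⊤))

/-- `Prog(ρ,v,w)`: the least element of `M_Even` satisfying `progCond`. -/
def Prog (ρ : V → G.Meas) (v w : V) : G.Meas :=
  if h : ∃ m, IsLeast {m | G.inMEven m ∧ G.progCond ρ v w m} m then h.choose else ⊤

/-- `ρ` takes values in `M_Even`. -/
def IsMeasure (ρ : V → G.Meas) : Prop := ∀ v, G.inMEven (ρ v)

/-- Game parity progress measure. -/
def IsGPM (ρ : V → G.Meas) : Prop :=
  G.IsMeasure ρ ∧ ∀ v,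
    (G.ownerEven v = true → ∃ w, G.E v w ∧ G.geAt (G.prio v) (ρ v) (G.Prog ρ v w)) ∧
    (G.ownerEven v = false → ∀ w, G.E v w → G.geAt (G.prio v) (ρ v) (G.Prog ρ v w))

/-- A play: an infinite `E`-path. -/
def IsPlay (π : ℕ → V) : Prop := ∀ n, G.E (π n) (π (n + 1))

/-- Priority `p` occurs infinitely often on `π`. -/
def InfOft (π : ℕ → V) (p : ℕ) : Prop := ∀ N, ∃ n, N ≤ n ∧ G.prio (π n) = p

/-- A play is won by Even iff the least priority occurring infinitely often is even. -/
def WonByEven (π : ℕ → V) : Prop := Even (sInf {p | G.InfOft π p})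

/-- Won by player `i` (`true` = Even, `false` = Odd). -/
def WonBy (i : Bool) (π : ℕ → V) : Prop :=
  if i then G.WonByEven π else ¬ G.WonByEven π

/-- The history of a play before time `n`. -/
def hist (π : ℕ → V) (n : ℕ) : List V := List.ofFn (fun k : Fin n => π (k : ℕ))

/-- A (history-dependent) strategy for player `i` is valid if it always moves along edges
from vertices of player `i`. -/
def ValidStrat (i : Bool) (σ : List V → V → V) : Prop :=
  ∀ h v, G.ownerEven v = i → G.E v (σ h v)

/-- Consistency of a play with a history-dependent strategy of player `i`. -/
def ConsH (i : Bool) (σ : List V → V → V) (π : ℕ → V) : Prop :=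
  ∀ n, G.ownerEven (π n) = i → π (n + 1) = σ (hist π n) (π n)

/-- Consistency of a play with a positional strategy of player `i`. -/
def ConsP (i : Bool) (σ : V → V) (π : ℕ → V) : Prop :=
  ∀ n, G.ownerEven (π n) = i → π (n + 1) = σ (π n)

/-- Winning region of player `i`: vertices from which `i` has a winning strategy. -/
def WinRegion (i : Bool) : Set V :=
  {v | ∃ σ : List V → V → V, G.ValidStrat i σ ∧
    ∀ π, G.IsPlay π → π 0 = v → G.ConsH i σ π → G.WonBy i π}

/-- The `i`-attractor into `U`. -/
def Attr (i : Bool) (U : Set V) : Set V :=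
  ⋂₀ {A | U ⊆ A ∧
    (∀ v, G.ownerEven v = i → (∃ w, G.E v w ∧ w ∈ A) → v ∈ A) ∧
    (∀ v, G.ownerEven v ≠ i → (∀ w, G.E v w → w ∈ A) → v ∈ A)}

/-- The guarded attractor `Attr^{≥k}_{Odd,W}(U)`. -/
def GAttr (k : ℕ) (W U : Set V) : Set V :=
  ⋂₀ {A | U ⊆ A ∧ A ⊆ W ∩ {v | k ≤ G.prio v} ∧
    ∀ u ∈ W ∩ {v | k ≤ G.prio v},
      (G.ownerEven u = false → (∃ w, G.E u w ∧ w ∈ A) → u ∈ A) ∧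
      (G.ownerEven u = true → (∀ w, G.E u w → w ∈ W → w ∈ A) → u ∈ A)}

/-- The lifting operator `Lift(ρ, v)`. -/
def Lift (ρ : V → G.Meas) (v : V) : V → G.Meas :=
  Function.update ρ v
    (if G.ownerEven v = true
      then max (ρ v) (sLeast {m | ∃ w, G.E v w ∧ m = G.Prog ρ v w} ⊤)
      else max (ρ v) (sGreatest {m | ∃ w, G.E v w ∧ m = G.Prog ρ v w} ⊤))

/-- The all-zero measure. -/
def zeroMeas : G.Meas := ((toLex (fun _ : Fin G.d => 0) : Lex (Fin G.d → ℕ)) : G.Meas)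

/-- A lifting sequence `ρ₀, …, ρ_N` in which `v` is the first vertex lifted to `⊤`. -/
def FirstTop (ρs : ℕ → V → G.Meas) (N : ℕ) (v : V) : Prop :=
  (∀ u, ρs 0 u = G.zeroMeas) ∧
  (∀ j < N, ∃ u, ρs (j + 1) = G.Lift (ρs j) u ∧
    (∀ w, ρs j w ≤ ρs (j + 1) w) ∧ ρs j ≠ ρs (j + 1)) ∧
  (∀ j < N, ∀ w, ρs j w ≠ ⊤) ∧
  ρs N v = ⊤

/-- The prefix `π 0 … π l` of a play is an `i`-dominated stretch. -/
def domStretchPrefix (π : ℕ → V) (i l : ℕ) : Prop :=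
  (∀ m ≤ l, i ≤ G.prio (π m)) ∧ (∃ m ≤ l, G.prio (π m) = i)

/-- The degree of the prefix `π 0 … π l` with respect to priority `i`: the number of
its vertices of priority `i`. -/
def degree (π : ℕ → V) (i l : ℕ) : ℕ :=
  ((Finset.range (l + 1)).filter (fun m => G.prio (π m) = i)).card

/-- The value `θ(π)` of a play: `⊤` if `π` is won by Odd, and otherwise the tuple whose
component at each odd position `i` is the degree of the maximal `i`-dominated stretch
that is a prefix of `π` (and `0` if there is no such prefix). -/
def theta (π : ℕ → V) : G.Meas :=
  if G.WonByEven π then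
    ((toLex (fun j : Fin G.d =>
      if Even (j : ℕ) then 0
      else sSup {c | ∃ l, G.domStretchPrefix π (j : ℕ) l ∧ c = G.degree π (j : ℕ) l}) :
        Lex (Fin G.d → ℕ)) : G.Meas)
  else ⊤

/-- `U` is an `i`-dominion inside the subgame induced on `W`. -/
def IsDominionIn (W : Set V) (i : Bool) (U : Set V) : Prop :=
  ∃ σ : List V → V → V,
    (∀ h u, u ∈ W → G.ownerEven u = i → G.E u (σ h u) ∧ σ h u ∈ W) ∧
    ∀ π, G.IsPlay π → (∀ n, π n ∈ W) → π 0 ∈ U → G.ConsH i σ π →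
      (∀ n, π n ∈ U) ∧ G.WonBy i π

/-- `U` is an `i`-dominion in `G`. -/
def IsDominion (i : Bool) (U : Set V) : Prop := G.IsDominionIn Set.univ i U

/-- Winning region of player `i` in the subgame induced on `W`. -/
def WinIn (W : Set V) (i : Bool) : Set V :=
  {v | v ∈ W ∧ ∃ σ : List V → V → V,
    (∀ h u, u ∈ W → G.ownerEven u = i → G.E u (σ h u) ∧ σ h u ∈ W) ∧
    ∀ π, G.IsPlay π → (∀ n, π n ∈ W) → π 0 = v → G.ConsH i σ π → G.WonBy i π}

end ParityGame

/-! If `P(v)` were even, `Prog(ρ,v,w)` would be bounded by the truncation of `ρ(w)` to the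
components `0, …, P(v)`, which is again in `M_Even` and differs from `⊤` as long as `ρ(w)`
does. Hence lifting a vertex of even priority cannot produce `⊤` before some vertex is
already `⊤`. -/

lemma sLeast_mem {α : Type*} [Preorder α] {s : Set α} {a : α} (h : IsLeast s a) (dflt : α) :
    sLeast s dflt ∈ s := by
  rw [sLeast, dif_pos ⟨a, h⟩]
  exact (Exists.choose_spec _ : IsLeast s _).1

lemma sGreatest_mem {α : Type*} [Preorder α] {s : Set α} {a : α} (h : IsGreatest s a)
    (dflt : α) : sGreatest s dflt ∈ s := by
  rw [sGreatest, dif_pos ⟨a, h⟩]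
  exact (Exists.choose_spec _ : IsGreatest s _).1

namespace ParityGame

variable {V : Type*} [Fintype V] (G : ParityGame V)

lemma inMEven_zeroMeas : G.inMEven G.zeroMeas :=
  Or.inr ⟨fun _ => 0, rfl, fun _ => ⟨fun _ => rfl, fun _ => Nat.zero_le _⟩⟩

lemma trunc_eq_top_iff {k : ℕ} {m : G.Meas} : G.trunc k m = ⊤ ↔ m = ⊤ :=
  WithTop.map_eq_top_iff

lemma trunc_trunc (k : ℕ) (m : G.Meas) : G.trunc k (G.trunc k m) = G.trunc k m := by
  induction m using WithTop.recTopCoe with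
  | top => rfl
  | coe f =>
    simp only [trunc, WithTop.map_coe, ofLex_toLex]
    congr 2
    funext j
    split_ifs <;> rfl

lemma inMEven_trunc (k : ℕ) {m : G.Meas} (hm : G.inMEven m) : G.inMEven (G.trunc k m) := by
  rcases hm with rfl | ⟨f, rfl, hf⟩
  · exact Or.inl rfl
  · refine Or.inr ⟨_, rfl, fun i => ⟨fun hi => ?_, fun hi => ?_⟩⟩ <;> split_ifs
    exacts [(hf i).1 hi, rfl, (hf i).2 hi, Nat.zero_le _]

lemma progCond_trunc_of_even (ρ : V → G.Meas) {v : V} (w : V) (hv : Even (G.prio v)) :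
    G.progCond ρ v w (G.trunc (G.prio v) (ρ w)) := by
  rw [progCond, if_pos hv, geAt, trunc_trunc]

lemma prog_le {ρ : V → G.Meas} {v w : V} {m : G.Meas} (hm : G.inMEven m)
    (hcond : G.progCond ρ v w m) : G.Prog ρ v w ≤ m := by
  let s := {m | G.inMEven m ∧ G.progCond ρ v w m}
  have hleast : IsLeast s (wellFounded_lt.min s ⟨m, hm, hcond⟩) :=
    ⟨wellFounded_lt.min_mem s _, fun _ hx => wellFounded_lt.min_le hx⟩
  rw [Prog, dif_pos ⟨_, hleast⟩]
  exact (Exists.choose_spec _ : IsLeast s _).2 ⟨hm, hcond⟩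

lemma prog_ne_top_of_even {ρ : V → G.Meas} {v w : V} (hv : Even (G.prio v))
    (hw : G.inMEven (ρ w)) (hw_ne_top : ρ w ≠ ⊤) : G.Prog ρ v w ≠ ⊤ :=
  ne_top_of_le_ne_top (G.trunc_eq_top_iff.not.mpr hw_ne_top)
    (G.prog_le (G.inMEven_trunc _ hw) (G.progCond_trunc_of_even ρ w hv))

lemma inMEven_prog (ρ : V → G.Meas) (v w : V) : G.inMEven (G.Prog ρ v w) := by
  rw [Prog]
  split_ifs with h
  exacts [h.choose_spec.1.1, Or.inl rfl]

section Lift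

variable [DecidableEq V]

lemma lift_self_eq_or_eq_prog (ρ : V → G.Meas) (v : V) :
    G.Lift ρ v v = ρ v ∨ ∃ w, G.E v w ∧ G.Lift ρ v v = G.Prog ρ v w := by
  set s := {m | ∃ w, G.E v w ∧ m = G.Prog ρ v w}
  set choice := if G.ownerEven v = true then sLeast s ⊤ else sGreatest s ⊤ with hchoice_def
  have hpost : {w | G.E v w}.Finite := Set.toFinite _
  have hchoice : choice ∈ s := by
    obtain ⟨a, ha, ha_min⟩ := Set.exists_min_image _ (G.Prog ρ v) hpost (G.total v)
    obtain ⟨b, hb, hb_max⟩ := Set.exists_max_image _ (G.Prog ρ v) hpost (G.total v)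
    rw [hchoice_def]
    split_ifs
    · exact sLeast_mem (s := s) ⟨⟨a, ha, rfl⟩, by rintro _ ⟨c, hc, rfl⟩; exact ha_min c hc⟩ ⊤
    · exact sGreatest_mem (s := s) ⟨⟨b, hb, rfl⟩, by rintro _ ⟨c, hc, rfl⟩; exact hb_max c hc⟩ ⊤
  have hlift : G.Lift ρ v v = max (ρ v) choice := by
    rw [Lift, Function.update_self, hchoice_def]
    split_ifs <;> rfl
  rcases max_choice (ρ v) choice with h | h
  · exact Or.inl (hlift.trans h)
  · obtain ⟨w, hw, hw_eq⟩ := hchoice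
    exact Or.inr ⟨w, hw, hlift.trans (h.trans hw_eq)⟩

lemma isMeasure_lift {ρ : V → G.Meas} (hρ : G.IsMeasure ρ) (u : V) :
    G.IsMeasure (G.Lift ρ u) := by
  intro x
  rcases eq_or_ne x u with rfl | hx
  · rcases G.lift_self_eq_or_eq_prog ρ x with h | ⟨w, -, h⟩ <;> rw [h]
    exacts [hρ x, G.inMEven_prog ρ x w]
  · rw [Lift, Function.update_of_ne hx]
    exact hρ x

lemma exists_prog_eq_top_of_lift_eq_top {ρ : V → G.Meas} {u v : V} (hv : ρ v ≠ ⊤)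
    (hlift : G.Lift ρ u v = ⊤) : ∃ w, G.E v w ∧ G.Prog ρ v w = ⊤ := by
  obtain rfl : u = v := by
    by_contra huv
    rw [Lift, Function.update_of_ne (Ne.symm huv)] at hlift
    exact hv hlift
  rcases G.lift_self_eq_or_eq_prog ρ u with h | ⟨w, hw, h⟩
  · exact absurd (h ▸ hlift) hv
  · exact ⟨w, hw, h ▸ hlift⟩

lemma FirstTop.isMeasure {G : ParityGame V} {ρs : ℕ → V → G.Meas} {N : ℕ} {v : V}
    (hft : G.FirstTop ρs N v) : ∀ j ≤ N, G.IsMeasure (ρs j) := by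
  intro j
  induction j with
  | zero => exact fun _ x => (hft.1 x).symm ▸ G.inMEven_zeroMeas
  | succ j ih =>
    intro hj
    obtain ⟨u, hlift, -, -⟩ := hft.2.1 j hj
    exact hlift ▸ G.isMeasure_lift (ih (j.le_succ.trans hj)) u

end Lift

end ParityGame

open ParityGame

/-- the first vertex lifted to `⊤` has odd priority. -/
theorem first_top_vertex_has_odd_priority
    {V : Type*} [Fintype V] [DecidableEq V] (G : ParityGame V)
    (ρs : ℕ → V → G.Meas) (N : ℕ) (v : V)
    (hft : G.FirstTop ρs N v) :
    Odd (G.prio v) := by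
  obtain ⟨hzero, hstep, hne_top, hN⟩ := id hft
  cases N with
  | zero => exact absurd ((hzero v).symm.trans hN) WithTop.coe_ne_top
  | succ M =>
    obtain ⟨u, hlift, -, -⟩ := hstep M M.lt_succ_self
    have hM : ∀ w, ρs M w ≠ ⊤ := hne_top M M.lt_succ_self
    obtain ⟨w, -, hw⟩ := G.exists_prog_eq_top_of_lift_eq_top (hM v) (hlift ▸ hN)
    rw [← Nat.not_even_iff_odd]
    exact fun heven => G.prog_ne_top_of_even heven (hft.isMeasure M M.le_succ w) (hM w) hw
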